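/- Let u, v ∈ S_n and fix 1 ≤ i < n. Then ∑_{p : i ∈ Des(p)} c_{u,v}^{p} · 𝔖_{p s_i}(1,…,1) = δ(v,i) · 𝔖_u(1,…,1) · 𝔖_{v s_i}(1,…,1) + δ(u,i) · 𝔖_{u s_i}(1,…,1) · 𝔖_v(1,…,1), where δ(w,i) is 1 if i is a descent of w and 0 otherwise, and the left-hand sum runs over permutations p with descent at position i. -/

import Mathlib

open MvPolynomial

noncomputable section

/-- The simple transposition `sᵢ` swapping `i` and `i+1` (we use it for `i ≥ 1`). -/
def simpT (i : ℕ) : Equiv.Perm ℕ := Equiv.swap i (i + 1)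

/-- `w ∈ Sₙ`: the permutation `w` of the positive integers (with `0` as an artificial
fixed point) fixes `0` and every integer greater than `n`. -/
def IsPermOf (n : ℕ) (w : Equiv.Perm ℕ) : Prop := ∀ i, i = 0 ∨ n < i → w i = i

/-- `w ∈ S_∞`: `w` fixes `0` and all but finitely many positive integers. -/
def FinPerm (w : Equiv.Perm ℕ) : Prop := ∃ n, IsPermOf n w

/-- Coxeter length: the number of inversions. -/
def len (w : Equiv.Perm ℕ) : ℕ := Set.ncard {p : ℕ × ℕ | p.1 < p.2 ∧ w p.2 < w p.1}

/-- The longest element of `Sₙ`, sending `i ↦ n+1-i` for `1 ≤ i ≤ n`. -/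
def w0 (n : ℕ) : Equiv.Perm ℕ :=
  Function.Involutive.toPerm (fun i => if 1 ≤ i ∧ i ≤ n then n + 1 - i else i)
    (by intro i; dsimp only; split_ifs <;> omega)

/-- The staircase monomial `x₁^(n-1) x₂^(n-2) ⋯ xₙ^0`. -/
def staircase (n : ℕ) : MvPolynomial ℕ ℤ := ∏ i ∈ Finset.Icc 1 n, X i ^ (n - i)

/-- The action of `sᵢ` on polynomials, swapping the variables `xᵢ` and `x_{i+1}`. -/
def swapVars (i : ℕ) (f : MvPolynomial ℕ ℤ) : MvPolynomial ℕ ℤ :=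
  rename (Equiv.swap i (i + 1)) f

/-- The Newton divided difference operator `Nᵢ(f) = (f - sᵢ·f)/(xᵢ - x_{i+1})`.
(The numerator is always divisible by `xᵢ - x_{i+1}`, and the quotient is unique
since we are in an integral domain; we extract it by choice.) -/
def divDiff (i : ℕ) (f : MvPolynomial ℕ ℤ) : MvPolynomial ℕ ℤ :=
  open Classical in
  if h : ∃ g, f - swapVars i f = (X i - X (i + 1)) * g then h.choose else 0

open Classical in
/-- Fuel-based recursion computing the Schubert polynomial of `w ∈ Sₙ`:
`𝔖_{w₀} = staircase n` and, if `i` is the least ascent of `w ≠ w₀`,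
`𝔖_w = Nᵢ 𝔖_{w sᵢ}` (equivalently `𝔖_{w sᵢ} = Nᵢ 𝔖_w` when `w sᵢ < w`).
Fuel `n*n` always suffices. -/
def SchubAux : ℕ → ℕ → Equiv.Perm ℕ → MvPolynomial ℕ ℤ
  | 0, n, w => if w = w0 n then staircase n else 0
  | (fuel + 1), n, w =>
      if w = w0 n then staircase n
      else if h : ∃ i, 1 ≤ i ∧ i < n ∧ w i < w (i + 1) then
        divDiff (Nat.find h) (SchubAux fuel n (w * simpT (Nat.find h)))
      else 0

/-- The Schubert polynomial of `w`, computed inside `Sₙ`. -/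
def SchubertIn (n : ℕ) (w : Equiv.Perm ℕ) : MvPolynomial ℕ ℤ := SchubAux (n * n) n w

open Classical in
/-- The Schubert polynomial `𝔖_w` for `w ∈ S_∞` (and junk value `0` otherwise). -/
def Schubert (w : Equiv.Perm ℕ) : MvPolynomial ℕ ℤ :=
  if h : FinPerm w then SchubertIn (Nat.find h) w else 0

/-- The isobaric operator `N̄ᵢ(f) = Nᵢ((1 - x_{i+1}) f)` for Grothendieck polynomials. -/
def divDiffBar (i : ℕ) (f : MvPolynomial ℕ ℤ) : MvPolynomial ℕ ℤ :=
  divDiff i ((1 - X (i + 1)) * f)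

open Classical in
/-- Fuel-based recursion computing the Grothendieck polynomial of `w ∈ Sₙ`. -/
def GrothAux : ℕ → ℕ → Equiv.Perm ℕ → MvPolynomial ℕ ℤ
  | 0, n, w => if w = w0 n then staircase n else 0
  | (fuel + 1), n, w =>
      if w = w0 n then staircase n
      else if h : ∃ i, 1 ≤ i ∧ i < n ∧ w i < w (i + 1) then
        divDiffBar (Nat.find h) (GrothAux fuel n (w * simpT (Nat.find h)))
      else 0

open Classical in
/-- The Grothendieck polynomial `𝔊_w` for `w ∈ S_∞`. -/
def Groth (w : Equiv.Perm ℕ) : MvPolynomial ℕ ℤ :=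
  if h : FinPerm w then GrothAux (Nat.find h * Nat.find h) (Nat.find h) w else 0

/-- The β-isobaric operator `f ↦ Nᵢ((1 + β x_{i+1}) f)`, where the variable `x₀`
plays the role of `β`. -/
def divDiffBeta (i : ℕ) (f : MvPolynomial ℕ ℤ) : MvPolynomial ℕ ℤ :=
  divDiff i ((1 + X 0 * X (i + 1)) * f)

open Classical in
/-- Fuel-based recursion computing the β-Grothendieck polynomial of `w ∈ Sₙ`,
with the variable `x₀` playing the role of `β`.  This agrees with
`𝔊_w^{(β)}(x) = (-β)^{-ℓ(w)} 𝔊_w(-βx)`. -/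
def GrothBAux : ℕ → ℕ → Equiv.Perm ℕ → MvPolynomial ℕ ℤ
  | 0, n, w => if w = w0 n then staircase n else 0
  | (fuel + 1), n, w =>
      if w = w0 n then staircase n
      else if h : ∃ i, 1 ≤ i ∧ i < n ∧ w i < w (i + 1) then
        divDiffBeta (Nat.find h) (GrothBAux fuel n (w * simpT (Nat.find h)))
      else 0

open Classical in
/-- The β-Grothendieck polynomial `𝔊_w^{(β)}` for `w ∈ S_∞`, with `x₀` as `β`. -/
def GrothB (w : Equiv.Perm ℕ) : MvPolynomial ℕ ℤ :=
  if h : FinPerm w then GrothBAux (Nat.find h * Nat.find h) (Nat.find h) w else 0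

/-- The operator `∇ = ∑ᵢ ∂/∂xᵢ`. -/
def nabla (f : MvPolynomial ℕ ℤ) : MvPolynomial ℕ ℤ := ∑ᶠ i, pderiv i f

/-- The Euler operator `E = ∑ᵢ xᵢ ∂/∂xᵢ`. -/
def euler (f : MvPolynomial ℕ ℤ) : MvPolynomial ℕ ℤ := ∑ᶠ i, X i * pderiv i f

/-- The operator `∇^β = ∑_{i≥1} ∂/∂xᵢ + β² ∂/∂β` (with `x₀` playing the role of `β`). -/
def nablaB (f : MvPolynomial ℕ ℤ) : MvPolynomial ℕ ℤ :=
  (∑ᶠ i ∈ {i : ℕ | 1 ≤ i}, pderiv i f) + X 0 ^ 2 * pderiv 0 f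

/-- The descent set `Des(w) = {i ≥ 1 : w(i) > w(i+1)}`. -/
def Des (w : Equiv.Perm ℕ) : Set ℕ := {i | 1 ≤ i ∧ w (i + 1) < w i}

/-- The major index `maj(w) = ∑_{i ∈ Des(w)} i`. -/
def maj (w : Equiv.Perm ℕ) : ℕ := ∑ᶠ i ∈ Des w, i

/-- The embedding `w ↦ 1 × w` with `(1×w)(i) = w(i-1) + 1` for `i ≥ 1`. -/
def oneTimes (w : Equiv.Perm ℕ) : Equiv.Perm ℕ where
  toFun i := if i = 0 then 0 else w (i - 1) + 1
  invFun i := if i = 0 then 0 else w⁻¹ (i - 1) + 1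
  left_inv := by
    intro i
    cases i with
    | zero => simp
    | succ j => simp
  right_inv := by
    intro i
    cases i with
    | zero => simp
    | succ j => simp

/-- Evaluation of a polynomial with all variables set to `1`. -/
def evalOne (f : MvPolynomial ℕ ℤ) : ℤ := MvPolynomial.eval (fun _ => (1 : ℤ)) f

/-- Left weak order: `a ≤_L b` iff `b = p a` with `ℓ(p) + ℓ(a) = ℓ(b)`. -/
def leL (a b : Equiv.Perm ℕ) : Prop := len (b * a⁻¹) + len a = len b


/-!
Apply `Nᵢ` to `𝔖_u 𝔖_v = ∑ c_{u,v}^w 𝔖_w` and set all variables to `1`. Since `Nᵢ` is a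
twisted derivation, `Nᵢ(fg) = Nᵢf · g + sᵢf · Nᵢg`, and evaluation at `1` is `sᵢ`-invariant,
this gives the identity once we know that `Nᵢ 𝔖_w = 𝔖_{w sᵢ}` when `i` is a descent of `w`
and `Nᵢ 𝔖_w = 0` otherwise.

That fact is the real content, since the recursive definition only uses the least ascent of
`w ∈ Sₙ`. The recursion at an arbitrary ascent follows from the nil-Coxeter relations
`Nᵢ² = 0`, `Nᵢ Nⱼ = Nⱼ Nᵢ` (`|i - j| ≥ 2`) and the braid relation, by induction on the number
of inversions. Independence of `n` reduces to `𝔖^{(n+1)}_{w₀⁽ⁿ⁾} = x^δₙ`, obtained by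
applying `N₁, …, Nₙ` to `x^δₙ₊₁` along `w₀⁽ⁿ⁺¹⁾ s₁ ⋯ sₖ`.
-/

section DividedDifferences

variable (i : ℕ)

@[simp] lemma swapVars_add (f g : MvPolynomial ℕ ℤ) :
    swapVars i (f + g) = swapVars i f + swapVars i g := map_add _ _ _

@[simp] lemma swapVars_sub (f g : MvPolynomial ℕ ℤ) :
    swapVars i (f - g) = swapVars i f - swapVars i g := map_sub _ _ _

@[simp] lemma swapVars_mul (f g : MvPolynomial ℕ ℤ) :
    swapVars i (f * g) = swapVars i f * swapVars i g := map_mul _ _ _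

lemma swapVars_X (j : ℕ) : swapVars i (X j) = X (Equiv.swap i (i + 1) j) := rename_X _ _

@[simp] lemma swapVars_X_left : swapVars i (X i) = X (i + 1) := by
  rw [swapVars_X, Equiv.swap_apply_left]

@[simp] lemma swapVars_X_right : swapVars i (X (i + 1)) = X i := by
  rw [swapVars_X, Equiv.swap_apply_right]

lemma swapVars_X_of_ne {i j : ℕ} (h₁ : j ≠ i) (h₂ : j ≠ i + 1) : swapVars i (X j) = X j := by
  rw [swapVars_X, Equiv.swap_apply_of_ne_of_ne h₁ h₂]

@[simp] lemma swapVars_swapVars (f : MvPolynomial ℕ ℤ) : swapVars i (swapVars i f) = f := by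
  simp only [swapVars, rename_rename]
  convert rename_id_apply f
  ext j
  simp

lemma X_sub_X_ne_zero {j k : ℕ} (h : j ≠ k) : (X j - X k : MvPolynomial ℕ ℤ) ≠ 0 :=
  sub_ne_zero_of_ne fun e => h (X_injective e)

lemma X_sub_X_dvd_sub_swapVars (f : MvPolynomial ℕ ℤ) :
    X i - X (i + 1) ∣ f - swapVars i f := by
  induction f using MvPolynomial.induction_on with
  | C a => exact ⟨0, by simp [swapVars]⟩
  | add p q hp hq => simpa [sub_add_sub_comm] using dvd_add hp hq
  | mul_X p j hp =>
    -- `p xⱼ - s(p) s(xⱼ) = (p - s p) xⱼ + s(p) (xⱼ - s xⱼ)`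
    have hX : X i - X (i + 1) ∣ X j - swapVars i (X j) := by
      by_cases h₁ : j = i
      · subst h₁; simp
      by_cases h₂ : j = i + 1
      · subst h₂; exact ⟨-1, by simp⟩
      · simp [swapVars_X_of_ne h₁ h₂]
    have := dvd_add (dvd_mul_of_dvd_left hp (X j)) (dvd_mul_of_dvd_right hX (swapVars i p))
    simpa [mul_sub, sub_mul] using this

lemma divDiff_spec (f : MvPolynomial ℕ ℤ) :
    f - swapVars i f = (X i - X (i + 1)) * divDiff i f := by
  have h : ∃ g, f - swapVars i f = (X i - X (i + 1)) * g := X_sub_X_dvd_sub_swapVars i f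
  rw [divDiff, dif_pos h]
  exact h.choose_spec

lemma divDiff_eq_of_sub_swapVars {f g : MvPolynomial ℕ ℤ}
    (h : f - swapVars i f = (X i - X (i + 1)) * g) : divDiff i f = g :=
  mul_left_cancel₀ (X_sub_X_ne_zero (by omega)) ((divDiff_spec i f).symm.trans h)

lemma divDiff_add (f g : MvPolynomial ℕ ℤ) :
    divDiff i (f + g) = divDiff i f + divDiff i g :=
  divDiff_eq_of_sub_swapVars i (by
    linear_combination -swapVars_add i f g + divDiff_spec i f + divDiff_spec i g)

lemma divDiff_mul (f g : MvPolynomial ℕ ℤ) :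
    divDiff i (f * g) = divDiff i f * g + swapVars i f * divDiff i g :=
  divDiff_eq_of_sub_swapVars i (by
    linear_combination -swapVars_mul i f g + g * divDiff_spec i f
      + swapVars i f * divDiff_spec i g)

lemma swapVars_divDiff (f : MvPolynomial ℕ ℤ) : swapVars i (divDiff i f) = divDiff i f := by
  have h := congrArg (swapVars i) (divDiff_spec i f)
  simp only [swapVars_sub, swapVars_mul, swapVars_swapVars, swapVars_X_left,
    swapVars_X_right] at h
  exact (divDiff_eq_of_sub_swapVars i (by linear_combination -h)).symm

lemma divDiff_divDiff (f : MvPolynomial ℕ ℤ) : divDiff i (divDiff i f) = 0 :=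
  divDiff_eq_of_sub_swapVars i (by rw [swapVars_divDiff]; ring)

@[simps!]
def divDiffHom : MvPolynomial ℕ ℤ →+ MvPolynomial ℕ ℤ :=
  AddMonoidHom.mk' (divDiff i) (divDiff_add i)

end DividedDifferences

section Relations

lemma simpT_mul_self (i : ℕ) : simpT i * simpT i = 1 := Equiv.swap_mul_self _ _

lemma simpT_comm {i j : ℕ} (h : i + 2 ≤ j) : simpT i * simpT j = simpT j * simpT i := by
  ext x
  simp only [simpT, Equiv.Perm.mul_apply, Equiv.swap_apply_def]
  split_ifs <;> omega

lemma simpT_braid (i : ℕ) :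
    simpT i * simpT (i + 1) * simpT i = simpT (i + 1) * simpT i * simpT (i + 1) := by
  ext x
  simp only [simpT, Equiv.Perm.mul_apply, Equiv.swap_apply_def]
  split_ifs <;> omega

lemma swapVars_swapVars_eq_rename (i j : ℕ) (f : MvPolynomial ℕ ℤ) :
    swapVars i (swapVars j f) = rename ⇑(simpT i * simpT j) f := by
  simp only [swapVars, rename_rename, Equiv.Perm.coe_mul, simpT]

lemma swapVars_comm {i j : ℕ} (h : i + 2 ≤ j) (f : MvPolynomial ℕ ℤ) :
    swapVars i (swapVars j f) = swapVars j (swapVars i f) := by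
  rw [swapVars_swapVars_eq_rename, swapVars_swapVars_eq_rename, simpT_comm h]

lemma swapVars_braid (i : ℕ) (f : MvPolynomial ℕ ℤ) :
    swapVars i (swapVars (i + 1) (swapVars i f))
      = swapVars (i + 1) (swapVars i (swapVars (i + 1) f)) := by
  have h := congrArg (fun σ : Equiv.Perm ℕ => rename ⇑σ f) (simpT_braid i)
  simpa only [swapVars, rename_rename, Equiv.Perm.coe_mul, simpT, Function.comp_assoc] using h

lemma divDiff_divDiff_spec_of_far {i j : ℕ} (h₁ : j ≠ i) (h₂ : j ≠ i + 1) (h₃ : i ≠ j + 1)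
    (f : MvPolynomial ℕ ℤ) :
    (X i - X (i + 1)) * (X j - X (j + 1)) * divDiff i (divDiff j f)
      = f - swapVars j f - swapVars i f + swapVars i (swapVars j f) := by
  have hj := divDiff_spec j f
  have hi := divDiff_spec i (divDiff j f)
  have hsj := congrArg (swapVars i) hj
  simp (disch := omega) only [swapVars_sub, swapVars_mul, swapVars_X_of_ne] at hsj
  linear_combination -(X j - X (j + 1)) * hi - hj + hsj

lemma divDiff_comm {i j : ℕ} (h : i + 2 ≤ j) (f : MvPolynomial ℕ ℤ) :
    divDiff i (divDiff j f) = divDiff j (divDiff i f) := by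
  have hΔ : (X i - X (i + 1)) * (X j - X (j + 1)) ≠ (0 : MvPolynomial ℕ ℤ) :=
    mul_ne_zero (X_sub_X_ne_zero (by omega)) (X_sub_X_ne_zero (by omega))
  refine mul_left_cancel₀ hΔ ?_
  rw [divDiff_divDiff_spec_of_far (by omega) (by omega) (by omega), mul_comm (X i - _),
    divDiff_divDiff_spec_of_far (by omega) (by omega) (by omega), swapVars_comm h]
  ring

lemma divDiff_braid_left_spec (i : ℕ) (f : MvPolynomial ℕ ℤ) :
    (X i - X (i + 1)) * (X (i + 1) - X (i + 1 + 1)) * (X i - X (i + 1 + 1))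
        * divDiff i (divDiff (i + 1) (divDiff i f))
      = f - swapVars i f - swapVars (i + 1) f + swapVars i (swapVars (i + 1) f)
        + swapVars (i + 1) (swapVars i f) - swapVars i (swapVars (i + 1) (swapVars i f)) := by
  have hB := divDiff_spec i f
  have hA := divDiff_spec (i + 1) (divDiff i f)
  have hP := divDiff_spec i (divDiff (i + 1) (divDiff i f))
  have hsA := congrArg (swapVars i) hA
  have htB := congrArg (swapVars (i + 1)) hB
  simp (disch := omega) only [swapVars_sub, swapVars_mul, swapVars_divDiff, swapVars_X_left,
    swapVars_X_right, swapVars_X_of_ne] at hsA htB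
  have hstB := congrArg (swapVars i) htB
  simp (disch := omega) only [swapVars_sub, swapVars_mul, swapVars_X_left, swapVars_X_of_ne]
    at hstB
  linear_combination -(X (i + 1) - X (i + 1 + 1)) * (X i - X (i + 1 + 1)) * hP
    - (X i - X (i + 1 + 1)) * hA + (X (i + 1) - X (i + 1 + 1)) * hsA - hB + htB - hstB

lemma divDiff_braid_right_spec (i : ℕ) (f : MvPolynomial ℕ ℤ) :
    (X i - X (i + 1)) * (X (i + 1) - X (i + 1 + 1)) * (X i - X (i + 1 + 1))
        * divDiff (i + 1) (divDiff i (divDiff (i + 1) f))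
      = f - swapVars i f - swapVars (i + 1) f + swapVars i (swapVars (i + 1) f)
        + swapVars (i + 1) (swapVars i f)
        - swapVars (i + 1) (swapVars i (swapVars (i + 1) f)) := by
  have hB := divDiff_spec (i + 1) f
  have hA := divDiff_spec i (divDiff (i + 1) f)
  have hQ := divDiff_spec (i + 1) (divDiff i (divDiff (i + 1) f))
  have htA := congrArg (swapVars (i + 1)) hA
  have hsB := congrArg (swapVars i) hB
  simp (disch := omega) only [swapVars_sub, swapVars_mul, swapVars_divDiff, swapVars_X_left,
    swapVars_X_right, swapVars_X_of_ne] at htA hsB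
  have htsB := congrArg (swapVars (i + 1)) hsB
  simp (disch := omega) only [swapVars_sub, swapVars_mul, swapVars_X_right, swapVars_X_of_ne]
    at htsB
  linear_combination -(X i - X (i + 1)) * (X i - X (i + 1 + 1)) * hQ
    - (X i - X (i + 1 + 1)) * hA + (X i - X (i + 1)) * htA - hB + hsB - htsB

-- Both sides are the antisymmetrisation over `⟨sᵢ, sᵢ₊₁⟩` divided by the Vandermonde.
lemma divDiff_braid (i : ℕ) (f : MvPolynomial ℕ ℤ) :
    divDiff i (divDiff (i + 1) (divDiff i f))
      = divDiff (i + 1) (divDiff i (divDiff (i + 1) f)) := by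
  have hΔ : (X i - X (i + 1)) * (X (i + 1) - X (i + 1 + 1)) * (X i - X (i + 1 + 1))
      ≠ (0 : MvPolynomial ℕ ℤ) :=
    mul_ne_zero (mul_ne_zero (X_sub_X_ne_zero (by omega)) (X_sub_X_ne_zero (by omega)))
      (X_sub_X_ne_zero (by omega))
  refine mul_left_cancel₀ hΔ ?_
  rw [divDiff_braid_left_spec, divDiff_braid_right_spec, swapVars_braid]

end Relations

section Permutations

variable {n : ℕ} {w : Equiv.Perm ℕ}

lemma w0_apply (n i : ℕ) : w0 n i = if 1 ≤ i ∧ i ≤ n then n + 1 - i else i := rfl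

lemma w0_mul_self (n : ℕ) : w0 n * w0 n = 1 := by
  ext i
  simp only [Equiv.Perm.mul_apply, w0_apply, Equiv.Perm.one_apply]
  split_ifs <;> omega

lemma isPermOf_w0 (n : ℕ) : IsPermOf n (w0 n) := by
  intro i hi
  rw [w0_apply, if_neg (by omega)]

lemma isPermOf_simpT {i : ℕ} (h₁ : 1 ≤ i) (h₂ : i < n) : IsPermOf n (simpT i) := by
  intro j hj
  exact Equiv.swap_apply_of_ne_of_ne (by omega) (by omega)

lemma IsPermOf.mono {m : ℕ} (hw : IsPermOf m w) (h : m ≤ n) : IsPermOf n w :=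
  fun i hi => hw i (by omega)

lemma IsPermOf.mul {v : Equiv.Perm ℕ} (hw : IsPermOf n w) (hv : IsPermOf n v) :
    IsPermOf n (w * v) := by
  intro i hi
  rw [Equiv.Perm.mul_apply, hv i hi, hw i hi]

lemma IsPermOf.apply_mem_Icc (hw : IsPermOf n w) {j : ℕ} (h₁ : 1 ≤ j) (h₂ : j ≤ n) :
    1 ≤ w j ∧ w j ≤ n := by
  by_contra h
  have hj : w (w j) = w j := hw (w j) (by omega)
  have := w.injective hj
  omega

lemma IsPermOf.eq_one_of_forall_lt_succ (hw : IsPermOf n w)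
    (h : ∀ k, 1 ≤ k → k < n → w k < w (k + 1)) : w = 1 := by
  have hmono : StrictMono w := strictMono_nat_of_lt_succ fun k => by
    rcases Nat.eq_zero_or_pos k with rfl | hk
    · rw [hw 0 (by omega)]
      exact Nat.pos_of_ne_zero fun h0 => by
        have := w.injective (h0.trans (hw 0 (by omega)).symm); omega
    rcases Nat.lt_or_ge k n with hkn | hkn
    · exact h k hk hkn
    · rw [hw (k + 1) (by omega)]
      rcases Nat.lt_or_ge n k with hnk | hnk
      · rw [hw k (by omega)]; omega
      · have := (hw.apply_mem_Icc hk hnk).2; omega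
  have : (hmono.orderIsoOfSurjective w w.surjective : ℕ → ℕ) = id :=
    congrArg _ (Subsingleton.elim _ (OrderIso.refl ℕ))
  ext k
  exact congrFun this k

def IsAscent (n : ℕ) (w : Equiv.Perm ℕ) (j : ℕ) : Prop := 1 ≤ j ∧ j < n ∧ w j < w (j + 1)

lemma not_isAscent_w0 (n j : ℕ) : ¬ IsAscent n (w0 n) j := by
  rintro ⟨h₁, h₂, h⟩
  rw [w0_apply, w0_apply, if_pos (by omega), if_pos (by omega)] at h
  omega

lemma IsPermOf.eq_w0_of_forall_not_isAscent (hw : IsPermOf n w)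
    (h : ∀ j, ¬ IsAscent n w j) : w = w0 n := by
  have hone : w0 n * w = 1 := by
    refine ((isPermOf_w0 n).mul hw).eq_one_of_forall_lt_succ fun k hk hkn => ?_
    have hdesc : w (k + 1) < w k := by
      have := h k
      have hne : w k ≠ w (k + 1) := fun e => by have := w.injective e; omega
      simp only [IsAscent, not_and, not_lt] at this
      exact lt_of_le_of_ne (this hk hkn) hne.symm
    have := hw.apply_mem_Icc hk hkn.le
    have := hw.apply_mem_Icc (j := k + 1) (by omega) hkn
    simp only [Equiv.Perm.mul_apply, w0_apply]
    rw [if_pos (by omega), if_pos (by omega)]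
    omega
  calc w = w0 n * w0 n * w := by rw [w0_mul_self, one_mul]
    _ = w0 n := by rw [mul_assoc, hone, mul_one]

lemma IsPermOf.exists_isAscent (hw : IsPermOf n w) (hne : w ≠ w0 n) : ∃ j, IsAscent n w j := by
  by_contra h
  exact hne (hw.eq_w0_of_forall_not_isAscent (not_exists.mp h))

lemma IsPermOf.mul_simpT {j : ℕ} (hw : IsPermOf n w) (hj : IsAscent n w j) :
    IsPermOf n (w * simpT j) :=
  hw.mul (isPermOf_simpT hj.1 hj.2.1)

@[simp] lemma mul_simpT_apply_left (w : Equiv.Perm ℕ) (i : ℕ) : (w * simpT i) i = w (i + 1) := by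
  simp [simpT]

@[simp] lemma mul_simpT_apply_right (w : Equiv.Perm ℕ) (i : ℕ) : (w * simpT i) (i + 1) = w i := by
  simp [simpT]

lemma mul_simpT_apply_of_ne (w : Equiv.Perm ℕ) {i j : ℕ} (h₁ : j ≠ i) (h₂ : j ≠ i + 1) :
    (w * simpT i) j = w j := by
  rw [Equiv.Perm.mul_apply, simpT, Equiv.swap_apply_of_ne_of_ne h₁ h₂]

lemma mul_simpT_mul_simpT (w : Equiv.Perm ℕ) (i : ℕ) : w * simpT i * simpT i = w := by
  rw [mul_assoc, simpT_mul_self, mul_one]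

end Permutations

section Inversions

open Finset

variable {n : ℕ} {w : Equiv.Perm ℕ}

def inversions (n : ℕ) (w : Equiv.Perm ℕ) : Finset (ℕ × ℕ) :=
  {p ∈ Icc 1 n ×ˢ Icc 1 n | p.1 < p.2 ∧ w p.2 < w p.1}

def invCount (n : ℕ) (w : Equiv.Perm ℕ) : ℕ := #(inversions n w)

lemma invCount_le (n : ℕ) (w : Equiv.Perm ℕ) : invCount n w ≤ n * n := by
  calc invCount n w ≤ #(Icc 1 n ×ˢ Icc 1 n) := card_filter_le _ _
    _ = n * n := by simp

lemma IsAscent.invCount_lt {j : ℕ} (hj : IsAscent n w j) :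
    invCount n w < invCount n (w * simpT j) := by
  obtain ⟨h₁, h₂, hlt⟩ := hj
  -- conjugating by `sⱼ` maps the inversions of `w` to those of `w sⱼ` other than `(j, j + 1)`
  let e : ℕ × ℕ ↪ ℕ × ℕ := (Equiv.prodCongr (simpT j) (simpT j)).toEmbedding
  have he : ∀ p, e p = (simpT j p.1, simpT j p.2) := fun _ => rfl
  have hsub : (inversions n w).map e ⊆ inversions n (w * simpT j) := by
    refine subset_iff.mpr fun q hq => ?_
    obtain ⟨p, hp, rfl⟩ := mem_map.mp hq
    have hp' : ¬ (p.1 = j ∧ p.2 = j + 1) := by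
      rintro ⟨e₁, e₂⟩
      simp only [inversions, mem_filter, e₁, e₂] at hp
      omega
    simp only [inversions, mem_filter, mem_product, mem_Icc] at hp
    rw [he, inversions, mem_filter]
    simp only [mem_product, mem_Icc, Equiv.Perm.mul_apply, simpT, Equiv.swap_apply_self]
    refine ⟨⟨⟨?_, ?_⟩, ?_, ?_⟩, ?_, hp.2.2⟩ <;> simp only [Equiv.swap_apply_def] <;>
      split_ifs <;> omega
  have hnew : (j, j + 1) ∉ (inversions n w).map e := by
    intro hq
    obtain ⟨p, hp, hpq⟩ := mem_map.mp hq
    have : p = (j + 1, j) := by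
      rw [← (Equiv.prodCongr (simpT j) (simpT j)).symm_apply_apply p]
      simp only [e, Equiv.coe_toEmbedding] at hpq
      rw [hpq]
      simp [simpT]
    simp [inversions, this] at hp
  have hmem : (j, j + 1) ∈ inversions n (w * simpT j) := by
    simp only [inversions, mem_filter, mem_product, mem_Icc, mul_simpT_apply_left,
      mul_simpT_apply_right]
    omega
  calc invCount n w = #((inversions n w).map e) := (card_map e).symm
    _ < invCount n (w * simpT j) :=
      card_lt_card ((ssubset_iff_of_subset hsub).mpr ⟨_, hmem, hnew⟩)

@[elab_as_elim]
lemma IsPermOf.invCount_induction {P : Equiv.Perm ℕ → Prop}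
    (step : ∀ w, IsPermOf n w →
      (∀ w', IsPermOf n w' → invCount n w < invCount n w' → P w') → P w)
    (hw : IsPermOf n w) : P w := by
  induction hk : n * n - invCount n w using Nat.strong_induction_on generalizing w with
  | _ k ih =>
    refine step w hw fun w' hw' hlt => ih _ ?_ hw' rfl
    have := invCount_le n w'
    omega

end Inversions

section Recursion

variable {n : ℕ} {w : Equiv.Perm ℕ}

lemma schubAux_w0 (fuel n : ℕ) : SchubAux fuel n (w0 n) = staircase n := by
  cases fuel <;> simp [SchubAux]

lemma schubertIn_w0 (n : ℕ) : SchubertIn n (w0 n) = staircase n := schubAux_w0 _ _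

lemma IsAscent.ne_w0 {j : ℕ} (hj : IsAscent n w j) : w ≠ w0 n := by
  rintro rfl
  exact not_isAscent_w0 n j hj

lemma schubAux_succ {fuel : ℕ} (hw : IsPermOf n w) (hfuel : n * n ≤ invCount n w + fuel) :
    SchubAux (fuel + 1) n w = SchubAux fuel n w := by
  induction fuel generalizing w with
  | zero =>
    by_cases hne : w = w0 n
    · rw [hne, schubAux_w0, schubAux_w0]
    obtain ⟨j, hj⟩ := hw.exists_isAscent hne
    have := hj.invCount_lt
    have := invCount_le n (w * simpT j)
    omega
  | succ fuel ih =>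
    by_cases hne : w = w0 n
    · rw [hne, schubAux_w0, schubAux_w0]
    have hex : ∃ i, 1 ≤ i ∧ i < n ∧ w i < w (i + 1) := hw.exists_isAscent hne
    rw [SchubAux, SchubAux, if_neg hne, if_neg hne, dif_pos hex, dif_pos hex]
    have hm : IsAscent n w (Nat.find hex) := Nat.find_spec hex
    have := hm.invCount_lt
    rw [ih (hw.mul_simpT hm) (by omega)]

-- `m` is the least ascent, through which `SchubertIn` is defined.
lemma IsPermOf.exists_schubertIn_eq_divDiff (hw : IsPermOf n w) {j : ℕ} (hj : IsAscent n w j) :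
    ∃ m, IsAscent n w m ∧ m ≤ j ∧ SchubertIn n w = divDiff m (SchubertIn n (w * simpT m)) := by
  have hex : ∃ i, 1 ≤ i ∧ i < n ∧ w i < w (i + 1) := ⟨j, hj⟩
  have hm : IsAscent n w (Nat.find hex) := Nat.find_spec hex
  refine ⟨Nat.find hex, hm, Nat.find_min' hex hj, ?_⟩
  have := hm.invCount_lt
  have := invCount_le n (w * simpT (Nat.find hex))
  obtain ⟨k, hk⟩ : ∃ k, n * n = k + 1 := ⟨n * n - 1, by omega⟩
  rw [SchubertIn, SchubertIn, hk, schubAux_succ (hw.mul_simpT hm) (by omega), SchubAux,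
    if_neg hj.ne_w0, dif_pos hex]

def DivDiffRecursive (n : ℕ) (w : Equiv.Perm ℕ) : Prop :=
  ∀ j, IsAscent n w j → SchubertIn n w = divDiff j (SchubertIn n (w * simpT j))

lemma IsPermOf.divDiffRecursive_far (hw : IsPermOf n w)
    (ih : ∀ w', IsPermOf n w' → invCount n w < invCount n w' → DivDiffRecursive n w')
    {m j : ℕ} (hm : IsAscent n w m) (hj : IsAscent n w j) (hmj : m + 2 ≤ j)
    (hrec : SchubertIn n w = divDiff m (SchubertIn n (w * simpT m))) :
    SchubertIn n w = divDiff j (SchubertIn n (w * simpT j)) := by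
  have hmj' : IsAscent n (w * simpT m) j := by
    refine ⟨hj.1, hj.2.1, ?_⟩
    simpa (disch := omega) only [mul_simpT_apply_of_ne] using hj.2.2
  have hjm' : IsAscent n (w * simpT j) m := by
    refine ⟨hm.1, hm.2.1, ?_⟩
    simpa (disch := omega) only [mul_simpT_apply_of_ne] using hm.2.2
  have hcomm : w * simpT m * simpT j = w * simpT j * simpT m := by
    rw [mul_assoc, mul_assoc, simpT_comm hmj]
  calc SchubertIn n w = divDiff m (SchubertIn n (w * simpT m)) := hrec
    _ = divDiff m (divDiff j (SchubertIn n (w * simpT m * simpT j))) := by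
      rw [ih _ (hw.mul_simpT hm) hm.invCount_lt j hmj']
    _ = divDiff j (divDiff m (SchubertIn n (w * simpT j * simpT m))) := by
      rw [divDiff_comm hmj, hcomm]
    _ = divDiff j (SchubertIn n (w * simpT j)) := by
      rw [← ih _ (hw.mul_simpT hj) hj.invCount_lt m hjm']

lemma IsPermOf.divDiffRecursive_braid (hw : IsPermOf n w)
    (ih : ∀ w', IsPermOf n w' → invCount n w < invCount n w' → DivDiffRecursive n w')
    {m : ℕ} (hm : IsAscent n w m) (hm₁ : IsAscent n w (m + 1))
    (hrec : SchubertIn n w = divDiff m (SchubertIn n (w * simpT m))) :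
    SchubertIn n w = divDiff (m + 1) (SchubertIn n (w * simpT (m + 1))) := by
  obtain ⟨h₁, -, hlt⟩ := id hm
  obtain ⟨-, h₂, hlt₁⟩ := id hm₁
  -- the four ascents used along the two reduced words `sₘ sₘ₊₁ sₘ` and `sₘ₊₁ sₘ sₘ₊₁`
  have hu : IsAscent n (w * simpT m) (m + 1) := by
    refine ⟨by omega, h₂, ?_⟩
    simpa (disch := omega) only [mul_simpT_apply_right, mul_simpT_apply_of_ne] using hlt.trans hlt₁
  have hv : IsAscent n (w * simpT m * simpT (m + 1)) m := by
    refine ⟨h₁, by omega, ?_⟩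
    simpa (disch := omega) only [mul_simpT_apply_left, mul_simpT_apply_of_ne] using hlt₁
  have hy : IsAscent n (w * simpT (m + 1)) m := by
    refine ⟨h₁, by omega, ?_⟩
    simpa (disch := omega) only [mul_simpT_apply_left, mul_simpT_apply_of_ne] using hlt.trans hlt₁
  have hz : IsAscent n (w * simpT (m + 1) * simpT m) (m + 1) := by
    refine ⟨by omega, h₂, ?_⟩
    simpa (disch := omega) only [mul_simpT_apply_right, mul_simpT_apply_of_ne] using hlt
  have hword : w * simpT m * simpT (m + 1) * simpT m
      = w * simpT (m + 1) * simpT m * simpT (m + 1) := by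
    simpa only [mul_assoc] using congrArg (w * ·) (simpT_braid m)
  have hwu := hw.mul_simpT hm
  have hwy := hw.mul_simpT hm₁
  have hlu := hm.invCount_lt
  have hly := hm₁.invCount_lt
  have hluv := hu.invCount_lt
  have hlyz := hy.invCount_lt
  calc SchubertIn n w = divDiff m (SchubertIn n (w * simpT m)) := hrec
    _ = divDiff m (divDiff (m + 1) (SchubertIn n (w * simpT m * simpT (m + 1)))) := by
      rw [ih _ hwu hlu (m + 1) hu]
    _ = divDiff m (divDiff (m + 1) (divDiff m
          (SchubertIn n (w * simpT m * simpT (m + 1) * simpT m)))) := by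
      rw [ih _ (hwu.mul_simpT hu) (hlu.trans hluv) m hv]
    _ = divDiff (m + 1) (divDiff m (divDiff (m + 1)
          (SchubertIn n (w * simpT (m + 1) * simpT m * simpT (m + 1))))) := by
      rw [divDiff_braid, hword]
    _ = divDiff (m + 1) (divDiff m (SchubertIn n (w * simpT (m + 1) * simpT m))) := by
      rw [← ih _ (hwy.mul_simpT hy) (hly.trans hlyz) (m + 1) hz]
    _ = divDiff (m + 1) (SchubertIn n (w * simpT (m + 1))) := by
      rw [← ih _ hwy hly m hy]

theorem IsPermOf.divDiffRecursive (hw : IsPermOf n w) : DivDiffRecursive n w := by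
  refine hw.invCount_induction fun w hw ih j hj => ?_
  obtain ⟨m, hm, hmj, hrec⟩ := hw.exists_schubertIn_eq_divDiff hj
  obtain rfl | rfl | hfar : m = j ∨ m + 1 = j ∨ m + 2 ≤ j := by omega
  · exact hrec
  · exact hw.divDiffRecursive_braid ih hm hj hrec
  · exact hw.divDiffRecursive_far ih hm hj hfar hrec

lemma IsPermOf.divDiff_schubertIn_of_descent (hw : IsPermOf n w) {i : ℕ} (h₁ : 1 ≤ i)
    (h₂ : i < n) (hd : w (i + 1) < w i) :
    divDiff i (SchubertIn n w) = SchubertIn n (w * simpT i) := by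
  have hi : IsAscent n (w * simpT i) i := ⟨h₁, h₂, by simpa using hd⟩
  have := (hw.mul (isPermOf_simpT h₁ h₂)).divDiffRecursive i hi
  rwa [mul_simpT_mul_simpT, eq_comm] at this

lemma IsPermOf.divDiff_schubertIn_of_isAscent (hw : IsPermOf n w) {i : ℕ} (hi : IsAscent n w i) :
    divDiff i (SchubertIn n w) = 0 := by
  rw [hw.divDiffRecursive i hi, divDiff_divDiff]

end Recursion

section Stability

open Finset

variable {M : ℕ} {w : Equiv.Perm ℕ}

lemma divDiff_mul_X_of_swapVars_eq {i : ℕ} {g : MvPolynomial ℕ ℤ} (hg : swapVars i g = g) :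
    divDiff i (g * X i) = g :=
  divDiff_eq_of_sub_swapVars i (by rw [swapVars_mul, hg, swapVars_X_left]; ring)

lemma swapVars_prod_X_pow {i : ℕ} {s : Finset ℕ} (hi : i ∈ s) (hi₁ : i + 1 ∈ s) (e : ℕ → ℕ)
    (he : e i = e (i + 1)) : swapVars i (∏ j ∈ s, X j ^ e j) = ∏ j ∈ s, X j ^ e j := by
  have hσ : ∀ j, e (Equiv.swap i (i + 1) j) = e j := fun j => by
    rw [Equiv.swap_apply_def]
    split_ifs <;> subst_vars <;> simp [he]
  rw [swapVars, map_prod]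
  simp only [map_pow, rename_X]
  conv_lhs => enter [2, j]; rw [← hσ j]
  refine Equiv.Perm.prod_comp (Equiv.swap i (i + 1)) s (fun j => X j ^ e j) fun j hj => ?_
  rw [Set.mem_ofPred_eq, Equiv.swap_apply_def] at hj
  split_ifs at hj <;> simp_all

def stairPoly (M k : ℕ) : MvPolynomial ℕ ℤ :=
  ∏ j ∈ Icc 1 (M + 1), X j ^ (if j ≤ k then M - j else M + 1 - j)

lemma stairPoly_zero (M : ℕ) : stairPoly M 0 = staircase (M + 1) :=
  prod_congr rfl fun j hj => by rw [if_neg (by simp at hj; omega)]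

lemma stairPoly_self (M : ℕ) : stairPoly M M = staircase M := by
  rw [stairPoly, staircase, prod_Icc_succ_top (by omega), if_neg (by omega), Nat.sub_self,
    pow_zero, mul_one]
  exact prod_congr rfl fun j hj => by rw [if_pos (by simp at hj; omega)]

lemma stairPoly_eq_mul_X {k : ℕ} (hk : k < M) :
    stairPoly M k = stairPoly M (k + 1) * X (k + 1) := by
  have hmem : k + 1 ∈ Icc 1 (M + 1) := by simp; omega
  rw [stairPoly, stairPoly, ← prod_erase_mul _ _ hmem, ← prod_erase_mul _ _ hmem,
    if_neg (by omega), if_pos le_rfl, mul_assoc, ← pow_succ,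
    show M + 1 - (k + 1) = M - (k + 1) + 1 by omega]
  congr 1
  refine prod_congr rfl fun j hj => ?_
  have : j ≠ k + 1 := (mem_erase.mp hj).1
  congr 1
  split_ifs <;> omega

lemma divDiff_stairPoly {k : ℕ} (hk : k < M) :
    divDiff (k + 1) (stairPoly M k) = stairPoly M (k + 1) := by
  rw [stairPoly_eq_mul_X hk]
  refine divDiff_mul_X_of_swapVars_eq
    (swapVars_prod_X_pow (by simp; omega) (by simp; omega) _ ?_)
  rw [if_pos le_rfl, if_neg (by omega)]
  omega

/-- `w₀⁽ᴹ⁺¹⁾ s₁ ⋯ s_k`: the value `M + 1` travels from position `1` to position `k + 1`. -/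
def w0MulSimpT (M : ℕ) : ℕ → Equiv.Perm ℕ
  | 0 => w0 (M + 1)
  | k + 1 => w0MulSimpT M k * simpT (k + 1)

lemma w0MulSimpT_apply {k : ℕ} (hk : k ≤ M) (x : ℕ) :
    w0MulSimpT M k x = if x = 0 then 0 else if x ≤ k then M + 1 - x else if x = k + 1 then M + 1
      else if x ≤ M + 1 then M + 2 - x else x := by
  induction k generalizing x with
  | zero =>
    simp only [w0MulSimpT, w0_apply]
    split_ifs <;> omega
  | succ k ih =>
    rw [w0MulSimpT, Equiv.Perm.mul_apply, simpT, Equiv.swap_apply_def]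
    split_ifs <;> simp only [ih (by omega)] <;> split_ifs <;> first | omega | contradiction

lemma isPermOf_w0MulSimpT {k : ℕ} (hk : k ≤ M) : IsPermOf (M + 1) (w0MulSimpT M k) := by
  induction k with
  | zero => exact isPermOf_w0 _
  | succ k ih => exact (ih (by omega)).mul (isPermOf_simpT (by omega) (by omega))

lemma w0MulSimpT_self (M : ℕ) : w0MulSimpT M M = w0 M := by
  ext x
  rw [w0MulSimpT_apply le_rfl, w0_apply]
  split_ifs <;> omega

lemma schubertIn_succ_w0 (M : ℕ) : SchubertIn (M + 1) (w0 M) = staircase M := by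
  have key : ∀ k ≤ M, SchubertIn (M + 1) (w0MulSimpT M k) = stairPoly M k := by
    intro k hk
    induction k with
    | zero => rw [w0MulSimpT, schubertIn_w0, stairPoly_zero]
    | succ k ih =>
      have hdesc : w0MulSimpT M k (k + 1 + 1) < w0MulSimpT M k (k + 1) := by
        rw [w0MulSimpT_apply (by omega), w0MulSimpT_apply (by omega)]
        split_ifs <;> first | omega | contradiction
      rw [w0MulSimpT, ← (isPermOf_w0MulSimpT (by omega)).divDiff_schubertIn_of_descent
        (by omega) (by omega) hdesc, ih (by omega), divDiff_stairPoly (by omega)]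
  rw [← w0MulSimpT_self, key M le_rfl, stairPoly_self]

lemma IsPermOf.schubertIn_succ (hw : IsPermOf M w) : SchubertIn (M + 1) w = SchubertIn M w := by
  refine hw.invCount_induction fun w hw ih => ?_
  by_cases hne : w = w0 M
  · rw [hne, schubertIn_succ_w0, schubertIn_w0]
  obtain ⟨j, hj⟩ := hw.exists_isAscent hne
  obtain ⟨m, hm, -, hrec⟩ := hw.exists_schubertIn_eq_divDiff hj
  have hm' : IsAscent (M + 1) w m := ⟨hm.1, by have := hm.2.1; omega, hm.2.2⟩
  rw [(hw.mono M.le_succ).divDiffRecursive m hm', hrec,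
    ih _ (hw.mul_simpT hm) hm.invCount_lt]

lemma IsPermOf.schubertIn_eq {m : ℕ} (hw : IsPermOf m w) (h : m ≤ M) :
    SchubertIn M w = SchubertIn m w := by
  induction M, h using Nat.le_induction with
  | base => rfl
  | succ M hmM ih => rw [(hw.mono hmM).schubertIn_succ, ih]

lemma IsPermOf.schubert_eq (hw : IsPermOf M w) : Schubert w = SchubertIn M w := by
  classical
  have hfin : FinPerm w := ⟨M, hw⟩
  rw [Schubert, dif_pos hfin]
  exact ((Nat.find_spec hfin).schubertIn_eq (Nat.find_min' hfin hw)).symm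

end Stability

lemma divDiff_schubert {i : ℕ} (hi : 1 ≤ i) {w : Equiv.Perm ℕ} (hw : FinPerm w) :
    divDiff i (Schubert w) = if w (i + 1) < w i then Schubert (w * simpT i) else 0 := by
  obtain ⟨n, hn⟩ := hw
  have hw : IsPermOf (max n (i + 1)) w := hn.mono (le_max_left _ _)
  have hin : i < max n (i + 1) := by omega
  rw [hw.schubert_eq]
  split_ifs with hd
  · rw [hw.divDiff_schubertIn_of_descent hi hin hd,
      (hw.mul (isPermOf_simpT hi hin)).schubert_eq]
  · have hne : w i ≠ w (i + 1) := fun e => by have := w.injective e; omega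
    exact hw.divDiff_schubertIn_of_isAscent ⟨hi, hin, by omega⟩

lemma evalOne_add (f g : MvPolynomial ℕ ℤ) : evalOne (f + g) = evalOne f + evalOne g :=
  map_add _ _ _

lemma evalOne_mul (f g : MvPolynomial ℕ ℤ) : evalOne (f * g) = evalOne f * evalOne g :=
  map_mul _ _ _

lemma evalOne_zsmul (a : ℤ) (f : MvPolynomial ℕ ℤ) : evalOne (a • f) = a * evalOne f := by
  rw [evalOne, map_zsmul, smul_eq_mul, evalOne]

lemma evalOne_swapVars (i : ℕ) (f : MvPolynomial ℕ ℤ) : evalOne (swapVars i f) = evalOne f := by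
  rw [evalOne, swapVars, eval_rename]
  rfl

lemma evalOne_divDiff_schubert_mul {i : ℕ} (hi : 1 ≤ i) {u v : Equiv.Perm ℕ} (hu : FinPerm u)
    (hv : FinPerm v) :
    evalOne (divDiff i (Schubert u * Schubert v))
      = (if v (i + 1) < v i then 1 else 0) * evalOne (Schubert u)
          * evalOne (Schubert (v * simpT i))
        + (if u (i + 1) < u i then 1 else 0) * evalOne (Schubert (u * simpT i))
          * evalOne (Schubert v) := by
  rw [divDiff_mul, evalOne_add, evalOne_mul, evalOne_mul, evalOne_swapVars,
    divDiff_schubert hi hu, divDiff_schubert hi hv]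
  split_ifs <;> simp [evalOne, add_comm]

lemma evalOne_divDiff_smul_schubert {i : ℕ} (hi : 1 ≤ i) {w : Equiv.Perm ℕ} (hw : FinPerm w)
    (a : ℤ) :
    evalOne (divDiff i (a • Schubert w))
      = if w (i + 1) < w i then a * evalOne (Schubert (w * simpT i)) else 0 := by
  rw [← divDiffHom_apply, map_zsmul, divDiffHom_apply, evalOne_zsmul, divDiff_schubert hi hw]
  split_ifs <;> simp [evalOne]

theorem kronecker_relation_general
    (c : Equiv.Perm ℕ → Equiv.Perm ℕ → Equiv.Perm ℕ → ℕ)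
    (hsupp : ∀ u v : Equiv.Perm ℕ, {w : Equiv.Perm ℕ | c u v w ≠ 0}.Finite)
    (hvanish : ∀ u v w : Equiv.Perm ℕ, ¬ FinPerm w → c u v w = 0)
    (hexp : ∀ u v : Equiv.Perm ℕ, FinPerm u → FinPerm v →
      Schubert u * Schubert v = ∑ᶠ w : Equiv.Perm ℕ, (c u v w : ℤ) • Schubert w)
    (n : ℕ) (u v : Equiv.Perm ℕ) (hu : IsPermOf n u) (hv : IsPermOf n v)
    (i : ℕ) (hi1 : 1 ≤ i) :
    (∑ᶠ p ∈ {p : Equiv.Perm ℕ | p (i + 1) < p i},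
        (c u v p : ℤ) * evalOne (Schubert (p * simpT i)))
      = (if v (i + 1) < v i then 1 else 0) * evalOne (Schubert u) * evalOne (Schubert (v * simpT i))
        + (if u (i + 1) < u i then 1 else 0) * evalOne (Schubert (u * simpT i)) * evalOne (Schubert v) := by
  have hfu : FinPerm u := ⟨n, hu⟩
  have hfv : FinPerm v := ⟨n, hv⟩
  let φ : MvPolynomial ℕ ℤ →+ ℤ :=
    (MvPolynomial.eval fun _ => (1 : ℤ)).toAddMonoidHom.comp (divDiffHom i)
  have hfin : (Function.support fun w => (c u v w : ℤ) • Schubert w).Finite :=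
    (hsupp u v).subset fun w hw h0 => hw (by simp [h0])
  calc ∑ᶠ p ∈ {p : Equiv.Perm ℕ | p (i + 1) < p i},
        (c u v p : ℤ) * evalOne (Schubert (p * simpT i))
      = ∑ᶠ w, φ ((c u v w : ℤ) • Schubert w) := by
        rw [finsum_mem_def]
        refine finsum_congr fun w => ?_
        by_cases hw : FinPerm w
        · simp only [Set.indicator_apply, Set.mem_ofPred_eq]
          exact (evalOne_divDiff_smul_schubert hi1 hw _).symm
        · simp [hvanish u v w hw]
    _ = φ (Schubert u * Schubert v) := by rw [hexp u v hfu hfv, φ.map_finsum hfin]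
    _ = _ := evalOne_divDiff_schubert_mul hi1 hfu hfv

theorem kronecker_relation
    (c : Equiv.Perm ℕ → Equiv.Perm ℕ → Equiv.Perm ℕ → ℕ)
    (hsupp : ∀ u v : Equiv.Perm ℕ, {w : Equiv.Perm ℕ | c u v w ≠ 0}.Finite)
    (hvanish : ∀ u v w : Equiv.Perm ℕ, ¬ FinPerm w → c u v w = 0)
    (hexp : ∀ u v : Equiv.Perm ℕ, FinPerm u → FinPerm v →
      Schubert u * Schubert v = ∑ᶠ w : Equiv.Perm ℕ, (c u v w : ℤ) • Schubert w)
    (n : ℕ) (u v : Equiv.Perm ℕ) (hu : IsPermOf n u) (hv : IsPermOf n v)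
    (i : ℕ) (hi1 : 1 ≤ i) (hi2 : i < n) :
    (∑ᶠ p ∈ {p : Equiv.Perm ℕ | p (i + 1) < p i},
        (c u v p : ℤ) * evalOne (Schubert (p * simpT i)))
      = (if v (i + 1) < v i then 1 else 0) * evalOne (Schubert u) * evalOne (Schubert (v * simpT i))
        + (if u (i + 1) < u i then 1 else 0) * evalOne (Schubert (u * simpT i)) * evalOne (Schubert v) :=
  kronecker_relation_general c hsupp hvanish hexp n u v hu hv i hi1

end
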